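/- Let f : A → Set Λ be an associated transition map on a commutative ring A. Let Ω_f(Λ) be the set of all f-ultrafilters on Λ, endowed with the topology for which the sets U(a) = {𝔘 ∈ Ω_f(Λ) | f(a) ∈ 𝔘}, for a ∈ A, form a base of closed sets. Then: (1) Ω_f(Λ) is a compact Hausdorff space; (2) the maximal spectrum Max(A) of A with the Zariski topology is homeomorphic to Ω_f(Λ), via the map sending a maximal ideal M to the f-ultrafilter f[M] = {f(a) | a ∈ M}. -/
import Mathlib


/-- A semi-transition map on a commutative ring `A` with values in subsets of a
nonempty set `Λ`. -/
structure IsSemiTransition {A : Type*} [CommRing A] {Λ : Type*} (ψ : A → Set Λ) : Prop where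
  nonempty : Nonempty Λ
  map_mul : ∀ a b : A, ψ (a * b) = ψ a ∪ ψ b
  map_one : ψ 1 = ∅
  eq_univ_iff : ∀ a : A, ψ a = Set.univ ↔ a = 0
  inter_eq : ∀ a b : A, ∃ c ∈ Ideal.span {a, b}, ψ a ∩ ψ b = ψ c ∧ ψ c ⊆ ψ (a + b)
  principal : ∀ a b : A, ψ a ∩ ψ b = ∅ →
    ∃ m n : ℕ, 0 < m ∧ 0 < n ∧ (Ideal.span {a ^ m, b ^ n} : Ideal A).IsPrincipal

/-- A pm-ring: every prime ideal is contained in a unique maximal ideal. -/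
def IsPMRing (A : Type*) [CommRing A] : Prop :=
  ∀ P : Ideal A, P.IsPrime → ∃! M : Ideal A, M.IsMaximal ∧ P ≤ M

/-- A transition map: a semi-transition map on a pm-ring which separates points of
`Λ` and admits complementary disjoint sets. -/
structure IsTransition {A : Type*} [CommRing A] {Λ : Type*} (ψ : A → Set Λ) : Prop where
  pm : IsPMRing A
  semi : IsSemiTransition ψ
  separates : ∀ l₁ l₂ : Λ, l₁ ≠ l₂ → ∃ a : A,
    (l₁ ∈ ψ a ∧ l₂ ∉ ψ a) ∨ (l₂ ∈ ψ a ∧ l₁ ∉ ψ a)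
  disjoint : ∀ (l : Λ) (a : A), l ∉ ψ a → ∃ b : A, l ∈ ψ b ∧ ψ a ∩ ψ b = ∅

/-- A `ψ`-filter on `Λ`: a nonempty subfamily of `{ψ a | a ∈ A}` not containing `∅`,
closed under the intersections `ψ a ∩ ψ b` and under supersets of the form `ψ c`. -/
structure IsPsiFilter {A : Type*} [CommRing A] {Λ : Type*} (ψ : A → Set Λ)
    (𝔉 : Set (Set Λ)) : Prop where
  nonempty : 𝔉.Nonempty
  subset_range : 𝔉 ⊆ Set.range ψ
  empty_not_mem : ∅ ∉ 𝔉
  inter_mem : ∀ a b : A, ψ a ∈ 𝔉 → ψ b ∈ 𝔉 → ψ a ∩ ψ b ∈ 𝔉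
  superset_mem : ∀ a c : A, ψ a ∈ 𝔉 → ψ a ⊆ ψ c → ψ c ∈ 𝔉

/-- A `ψ`-ultrafilter: a `ψ`-filter maximal with respect to inclusion. -/
def IsPsiUltrafilter {A : Type*} [CommRing A] {Λ : Type*} (ψ : A → Set Λ)
    (𝔉 : Set (Set Λ)) : Prop :=
  IsPsiFilter ψ 𝔉 ∧ ∀ 𝔊 : Set (Set Λ), IsPsiFilter ψ 𝔊 → 𝔉 ⊆ 𝔊 → 𝔉 = 𝔊

/-- The space `Ω_f(Λ)` of `f`-ultrafilters on `Λ`. -/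
abbrev OmegaF {A : Type*} [CommRing A] {Λ : Type*} (f : A → Set Λ) : Type _ :=
  {𝔘 : Set (Set Λ) // IsPsiUltrafilter f 𝔘}

/-- The topology on `Ω_f(Λ)` whose base of closed sets consists of the sets
`U(a) = {𝔘 | f a ∈ 𝔘}`. -/
instance {A : Type*} [CommRing A] {Λ : Type*} (f : A → Set Λ) :
    TopologicalSpace (OmegaF f) :=
  TopologicalSpace.generateFrom {V | ∃ a : A, V = {𝔘 : OmegaF f | f a ∈ 𝔘.1}ᶜ}

/-- The maximal spectrum of a commutative ring: the set of maximal ideals. -/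
abbrev MaxSpec (A : Type*) [CommRing A] : Type _ := {M : Ideal A // M.IsMaximal}

/-- The Zariski topology on the maximal spectrum: the sets
`{M | a ∈ M}` form a base of closed sets. -/
instance (A : Type*) [CommRing A] : TopologicalSpace (MaxSpec A) :=
  TopologicalSpace.generateFrom {V | ∃ a : A, V = {M : MaxSpec A | a ∈ M.1}ᶜ}

section TransitionAux

variable {A : Type*} [CommRing A] {Λ : Type*} {f : A → Set Λ}

lemma psi_zero (hs : IsSemiTransition f) : f 0 = Set.univ := (hs.eq_univ_iff 0).2 rfl

lemma psi_inter_ne_empty (hs : IsSemiTransition f)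
    (hassoc : ∀ a : A, f a = ∅ → IsUnit a) {I : Ideal A} (hI : I ≠ ⊤)
    {a b : A} (ha : a ∈ I) (hb : b ∈ I) : f a ∩ f b ≠ ∅ := by
  obtain ⟨c, hcspan, hceq, -⟩ := hs.inter_eq a b
  intro h
  have hcI : c ∈ I := by
    have hle : Ideal.span {a, b} ≤ I := Ideal.span_le.2 (by
      simp [Set.insert_subset_iff, ha, hb])
    exact hle hcspan
  have hcu : IsUnit c := hassoc c (by rw [← hceq]; exact h)
  exact hI (Ideal.eq_top_of_isUnit_mem I hcI hcu)

lemma gelfand_identity (hpm : IsPMRing A) {a b : A} (hab : a + b = 1) :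
    ∃ r s : A, (1 + r * a) * (1 + s * b) = 0 := by
  by_contra hcon
  push_neg at hcon
  set S : Submonoid A :=
    { carrier := {x | ∃ r s : A, x = (1 + r * a) * (1 + s * b)}
      one_mem' := ⟨0, 0, by ring⟩
      mul_mem' := by
        rintro x y ⟨r, s, rfl⟩ ⟨r', s', rfl⟩
        exact ⟨r + r' + r * r' * a, s + s' + s * s' * b, by ring⟩ } with hSdef
  have hdisj : Disjoint ((⊥ : Ideal A) : Set A) (S : Set A) := by
    rw [Set.disjoint_left]
    rintro x hx hxS
    rw [SetLike.mem_coe, Ideal.mem_bot] at hx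
    subst hx
    obtain ⟨r, s, h0⟩ := hxS
    exact hcon r s h0.symm
  obtain ⟨P, hP, -, hPdisj⟩ := Ideal.exists_le_prime_disjoint ⊥ S hdisj
  have hmax : ∀ x : A, (∀ r : A, 1 + r * x ∈ S) →
      ∃ M : Ideal A, M.IsMaximal ∧ P ≤ M ∧ x ∈ M := by
    intro x hx
    have hne : P ⊔ Ideal.span {x} ≠ ⊤ := by
      intro htop
      have h1 : (1 : A) ∈ P ⊔ Ideal.span {x} := htop ▸ Submodule.mem_top
      obtain ⟨p, hp, z, hz, hpz⟩ := Submodule.mem_sup.1 h1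
      rw [Ideal.mem_span_singleton'] at hz
      obtain ⟨r, hr⟩ := hz
      have hpS : p ∈ S := by
        have hpe : p = 1 + (-r) * x := by
          have : p = 1 - r * x := by rw [← hpz, ← hr]; ring
          rw [this]; ring
        rw [hpe]; exact hx (-r)
      exact Set.disjoint_left.1 hPdisj hp hpS
    obtain ⟨M, hM, hle⟩ := Ideal.exists_le_maximal _ hne
    exact ⟨M, hM, le_trans le_sup_left hle,
      hle (Ideal.mem_sup_right (Ideal.subset_span rfl))⟩
  obtain ⟨M, hMmax, hPM, haM⟩ := hmax a (fun r => ⟨r, 0, by ring⟩)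
  obtain ⟨N, hNmax, hPN, hbN⟩ := hmax b (fun s => ⟨0, s, by ring⟩)
  have hMN : M = N := by
    obtain ⟨K, -, hK⟩ := hpm P hP
    rw [hK M ⟨hMmax, hPM⟩, hK N ⟨hNmax, hPN⟩]
  have h1M : (1 : A) ∈ M := by
    rw [← hab]; exact M.add_mem haM (hMN ▸ hbN)
  exact hMmax.ne_top ((Ideal.eq_top_iff_one M).2 h1M)

lemma exists_psi_disjoint_of_not_mem (hs : IsSemiTransition f) (hpm : IsPMRing A)
    {M : Ideal A} (hM : M.IsMaximal) {b : A} (hb : b ∉ M) :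
    ∃ q ∈ M, f q ∩ f b = ∅ := by
  obtain ⟨r, m, hm, hrm⟩ := hM.exists_inv hb
  obtain ⟨u, v, huv⟩ := gelfand_identity hpm (show m + r * b = 1 by linear_combination hrm)
  set q : A := 1 + v * (r * b) with hq
  have hpnot : (1 + u * m) ∉ M := by
    intro h
    refine hM.ne_top ((Ideal.eq_top_iff_one M).2 ?_)
    have h1 : (1 : A) = (1 + u * m) - u * m := by ring
    rw [h1]; exact M.sub_mem h (M.mul_mem_left u hm)
  have hqM : q ∈ M := by
    have h0 : (1 + u * m) * q ∈ M := by rw [huv]; exact M.zero_mem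
    exact (hM.isPrime.mem_or_mem h0).resolve_left hpnot
  refine ⟨q, hqM, ?_⟩
  obtain ⟨c, -, hceq, hcsub⟩ := hs.inter_eq q (-(v * (r * b)))
  have hsum : q + -(v * (r * b)) = 1 := by rw [hq]; ring
  have hcempty : f c ⊆ (∅ : Set Λ) := by
    rw [← hs.map_one, ← hsum]; exact hcsub
  have hbsub : f b ⊆ f (-(v * (r * b))) := by
    rw [show -(v * (r * b)) = (-(v * r)) * b by ring, hs.map_mul]
    exact Set.subset_union_right
  refine Set.subset_empty_iff.1 ?_
  refine (Set.inter_subset_inter_right _ hbsub).trans ?_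
  rw [hceq]; exact hcempty

lemma psi_mem_image_iff (hs : IsSemiTransition f) (hpm : IsPMRing A)
    (hassoc : ∀ a : A, f a = ∅ → IsUnit a) {M : Ideal A} (hM : M.IsMaximal) (b : A) :
    f b ∈ f '' (M : Set A) ↔ b ∈ M := by
  constructor
  · rintro ⟨a, haM, hab⟩
    by_contra hb
    obtain ⟨q, hq, hdisj⟩ := exists_psi_disjoint_of_not_mem hs hpm hM hb
    exact psi_inter_ne_empty hs hassoc hM.ne_top hq haM (by rw [hab]; exact hdisj)
  · exact fun h => ⟨b, h, rfl⟩

lemma image_isPsiFilter (hs : IsSemiTransition f)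
    (hassoc : ∀ a : A, f a = ∅ → IsUnit a) {M : Ideal A} (hM : M.IsMaximal) :
    IsPsiFilter f (f '' (M : Set A)) where
  nonempty := ⟨f 0, 0, M.zero_mem, rfl⟩
  subset_range := by rintro s ⟨a, -, rfl⟩; exact ⟨a, rfl⟩
  empty_not_mem := by
    rintro ⟨a, haM, ha⟩
    exact hM.ne_top (Ideal.eq_top_of_isUnit_mem _ haM (hassoc a ha))
  inter_mem := by
    rintro a b ⟨a', ha', haeq⟩ ⟨b', hb', hbeq⟩
    obtain ⟨c, hcspan, hceq, -⟩ := hs.inter_eq a' b'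
    refine ⟨c, ?_, by rw [← hceq, haeq, hbeq]⟩
    have hle : Ideal.span {a', b'} ≤ M := Ideal.span_le.2 (by
      simp [Set.insert_subset_iff, ha', hb'])
    exact hle hcspan
  superset_mem := by
    rintro a c ⟨a', ha', haeq⟩ hac
    refine ⟨a' * c, M.mul_mem_right c ha', ?_⟩
    rw [hs.map_mul, haeq, Set.union_eq_right.2 hac]

lemma image_isPsiUltrafilter (hs : IsSemiTransition f) (hpm : IsPMRing A)
    (hassoc : ∀ a : A, f a = ∅ → IsUnit a) {M : Ideal A} (hM : M.IsMaximal) :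
    IsPsiUltrafilter f (f '' (M : Set A)) := by
  refine ⟨image_isPsiFilter hs hassoc hM, fun 𝔊 h𝔊 hsub => ?_⟩
  refine Set.Subset.antisymm hsub ?_
  intro s hsG
  obtain ⟨b, rfl⟩ := h𝔊.subset_range hsG
  rcases em (b ∈ M) with hb | hb
  · exact ⟨b, hb, rfl⟩
  · obtain ⟨q, hq, hdisj⟩ := exists_psi_disjoint_of_not_mem hs hpm hM hb
    have hqG : f q ∈ 𝔊 := hsub ⟨q, hq, rfl⟩
    have hmem := h𝔊.inter_mem q b hqG hsG
    rw [hdisj] at hmem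
    exact absurd hmem h𝔊.empty_not_mem

lemma exists_disjoint_of_not_mem_ultrafilter (hs : IsSemiTransition f)
    {𝔘 : Set (Set Λ)} (hU : IsPsiUltrafilter f 𝔘) {a : A} (ha : f a ∉ 𝔘) :
    ∃ b : A, f b ∈ 𝔘 ∧ f a ∩ f b = ∅ := by
  by_contra hcon
  push_neg at hcon
  obtain ⟨s₀, hs₀⟩ := hU.1.nonempty
  obtain ⟨b₀, rfl⟩ := hU.1.subset_range hs₀
  set 𝔊 : Set (Set Λ) :=
    {s | ∃ d : A, s = f d ∧ ∃ b : A, f b ∈ 𝔘 ∧ f a ∩ f b ⊆ f d} with h𝔊def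
  have hfil : IsPsiFilter f 𝔊 := by
    constructor
    · exact ⟨f a, a, rfl, b₀, hs₀, Set.inter_subset_left⟩
    · rintro s ⟨d, rfl, -⟩; exact ⟨d, rfl⟩
    · rintro ⟨d, hd, b, hbU, hsub⟩
      rw [← hd] at hsub
      obtain ⟨l, hl⟩ := hcon b hbU
      exact Set.notMem_empty l (hsub hl)
    · intro x y hx hy
      obtain ⟨d₁, hxd, b₁, hb₁, hsub₁⟩ := hx
      obtain ⟨d₂, hyd, b₂, hb₂, hsub₂⟩ := hy
      obtain ⟨c, -, hceq, -⟩ := hs.inter_eq b₁ b₂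
      obtain ⟨e, -, heeq, -⟩ := hs.inter_eq x y
      refine ⟨e, heeq, c, ?_, ?_⟩
      · have hmem := hU.1.inter_mem b₁ b₂ hb₁ hb₂
        rwa [hceq] at hmem
      · rw [← heeq, ← hceq]
        rintro l ⟨hla, hlb₁, hlb₂⟩
        refine ⟨?_, ?_⟩
        · rw [hxd]; exact hsub₁ ⟨hla, hlb₁⟩
        · rw [hyd]; exact hsub₂ ⟨hla, hlb₂⟩
    · intro x c hx hxc
      obtain ⟨d, hxd, b, hb, hsub⟩ := hx
      exact ⟨c, rfl, b, hb, hsub.trans (by rw [← hxd]; exact hxc)⟩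
  have hsubUG : 𝔘 ⊆ 𝔊 := by
    intro s hsU
    obtain ⟨b, rfl⟩ := hU.1.subset_range hsU
    exact ⟨b, rfl, b, hsU, Set.inter_subset_right⟩
  have heq := hU.2 𝔊 hfil hsubUG
  apply ha
  rw [heq]
  exact ⟨a, rfl, b₀, hs₀, Set.inter_subset_left⟩

lemma exists_maximal_image_eq (hs : IsSemiTransition f) (hpm : IsPMRing A)
    (hassoc : ∀ a : A, f a = ∅ → IsUnit a)
    {𝔘 : Set (Set Λ)} (hU : IsPsiUltrafilter f 𝔘) :
    ∃ M : Ideal A, M.IsMaximal ∧ f '' (M : Set A) = 𝔘 := by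
  have huniv : f 0 ∈ 𝔘 := by
    obtain ⟨s, hsU⟩ := hU.1.nonempty
    obtain ⟨b, rfl⟩ := hU.1.subset_range hsU
    exact hU.1.superset_mem b 0 hsU (by rw [psi_zero hs]; exact Set.subset_univ _)
  set I : Ideal A :=
    { carrier := {a : A | f a ∈ 𝔘}
      zero_mem' := huniv
      add_mem' := by
        intro x y hx hy
        obtain ⟨c, -, hceq, hcsub⟩ := hs.inter_eq x y
        have hc : f c ∈ 𝔘 := by
          have hmem := hU.1.inter_mem x y hx hy
          rwa [hceq] at hmem
        exact hU.1.superset_mem c (x + y) hc hcsub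
      smul_mem' := by
        intro r x hx
        have hsub : f x ⊆ f (r * x) := by
          rw [hs.map_mul]; exact Set.subset_union_right
        have := hU.1.superset_mem x (r * x) hx hsub
        simpa using this } with hIdef
  have hne : I ≠ ⊤ := by
    intro h
    have h1 : (1 : A) ∈ I := h ▸ Submodule.mem_top
    have h1' : f 1 ∈ 𝔘 := h1
    rw [hs.map_one] at h1'
    exact hU.1.empty_not_mem h1'
  obtain ⟨M, hM, hIM⟩ := Ideal.exists_le_maximal I hne
  refine ⟨M, hM, ?_⟩
  have hsub : f '' (M : Set A) ⊆ 𝔘 := by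
    rintro s ⟨a, haM, rfl⟩
    by_contra ha
    obtain ⟨b, hbU, hdisj⟩ := exists_disjoint_of_not_mem_ultrafilter hs hU ha
    have hbI : b ∈ I := hbU
    exact psi_inter_ne_empty hs hassoc hM.ne_top haM (hIM hbI) hdisj
  exact (image_isPsiUltrafilter hs hpm hassoc hM).2 𝔘 hU.1 hsub

end TransitionAux

/-- Theorem: for an associated transition map `f : A → Set Λ`, the space `Ω_f(Λ)` of
`f`-ultrafilters (with the topology generated by the closed base
`U(a) = {𝔘 | f a ∈ 𝔘}`) is a compact Hausdorff space, and the maximal spectrum of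
`A` with the Zariski topology is homeomorphic to `Ω_f(Λ)` via `M ↦ f[M]`. -/

theorem omega_compact_hausdorff_homeo_maxSpec {A : Type*} [CommRing A] {Λ : Type*}
    (f : A → Set Λ) (hf : IsTransition f) (hassoc : ∀ a : A, f a = ∅ → IsUnit a) :
    CompactSpace (OmegaF f) ∧ T2Space (OmegaF f) ∧
    ∃ h : MaxSpec A ≃ₜ OmegaF f,
      ∀ M : MaxSpec A, ((h M).1 : Set (Set Λ)) = f '' (M.1 : Set A) := by
  classical
  have hs := hf.semi
  have hpm := hf.pm
  have hg : ∀ M : MaxSpec A, IsPsiUltrafilter f (f '' (M.1 : Set A)) :=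
    fun M => image_isPsiUltrafilter hs hpm hassoc M.2
  have hinj : Function.Injective
      (fun M : MaxSpec A => (⟨f '' (M.1 : Set A), hg M⟩ : OmegaF f)) := by
    intro M N hMN
    have himg : f '' (M.1 : Set A) = f '' (N.1 : Set A) :=
      congrArg Subtype.val hMN
    apply Subtype.ext
    apply Submodule.ext
    intro a
    rw [← psi_mem_image_iff hs hpm hassoc M.2 a,
        ← psi_mem_image_iff hs hpm hassoc N.2 a, himg]
  have hsurj : Function.Surjective
      (fun M : MaxSpec A => (⟨f '' (M.1 : Set A), hg M⟩ : OmegaF f)) := by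
    intro 𝔘
    obtain ⟨M, hM, hMeq⟩ := exists_maximal_image_eq hs hpm hassoc 𝔘.2
    exact ⟨⟨M, hM⟩, Subtype.ext hMeq⟩
  let e : MaxSpec A ≃ OmegaF f :=
    Equiv.ofBijective (fun M : MaxSpec A => (⟨f '' (M.1 : Set A), hg M⟩ : OmegaF f))
      ⟨hinj, hsurj⟩
  have key : ∀ (M : MaxSpec A) (a : A), f a ∈ (e M).1 ↔ a ∈ M.1 :=
    fun M a => psi_mem_image_iff hs hpm hassoc M.2 a
  have hcont₁ : Continuous (e : MaxSpec A → OmegaF f) := by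
    apply continuous_generateFrom_iff.mpr
    rintro s ⟨a, rfl⟩
    have hpre : ((e : MaxSpec A → OmegaF f) ⁻¹' {𝔘 : OmegaF f | f a ∈ 𝔘.1}ᶜ)
        = {M : MaxSpec A | a ∈ M.1}ᶜ := by
      ext M
      simp only [Set.mem_preimage, Set.mem_compl_iff, Set.mem_setOf_eq]
      rw [key M a]
    rw [hpre]
    exact TopologicalSpace.isOpen_generateFrom_of_mem ⟨a, rfl⟩
  have hcont₂ : Continuous (e.symm : OmegaF f → MaxSpec A) := by
    apply continuous_generateFrom_iff.mpr
    rintro s ⟨a, rfl⟩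
    have hpre : ((e.symm : OmegaF f → MaxSpec A) ⁻¹' {M : MaxSpec A | a ∈ M.1}ᶜ)
        = {𝔘 : OmegaF f | f a ∈ 𝔘.1}ᶜ := by
      ext 𝔘
      simp only [Set.mem_preimage, Set.mem_compl_iff, Set.mem_setOf_eq]
      rw [← key (e.symm 𝔘) a, Equiv.apply_symm_apply]
    rw [hpre]
    exact TopologicalSpace.isOpen_generateFrom_of_mem ⟨a, rfl⟩
  let h : MaxSpec A ≃ₜ OmegaF f :=
    { e with continuous_toFun := hcont₁, continuous_invFun := hcont₂ }
  haveI hT2 : T2Space (MaxSpec A) := by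
    constructor
    intro M N hMN
    have hnle : ¬ M.1 ≤ N.1 := fun hle =>
      hMN (Subtype.ext (M.2.eq_of_le N.2.ne_top hle))
    obtain ⟨a, haM, haN⟩ := SetLike.not_le_iff_exists.1 hnle
    obtain ⟨r, n, hn, hrn⟩ := N.2.exists_inv haN
    obtain ⟨u, v, huv⟩ := gelfand_identity hpm
      (show n + r * a = 1 by linear_combination hrn)
    have hpN : (1 + u * n) ∉ N.1 := by
      intro hmem
      refine N.2.ne_top ((Ideal.eq_top_iff_one _).2 ?_)
      have h1 : (1 : A) = (1 + u * n) - u * n := by ring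
      rw [h1]; exact N.1.sub_mem hmem (N.1.mul_mem_left u hn)
    have hqM : (1 + v * (r * a)) ∉ M.1 := by
      intro hmem
      refine M.2.ne_top ((Ideal.eq_top_iff_one _).2 ?_)
      have h1 : (1 : A) = (1 + v * (r * a)) - v * (r * a) := by ring
      rw [h1]
      exact M.1.sub_mem hmem (M.1.mul_mem_left v (M.1.mul_mem_left r haM))
    refine ⟨{L : MaxSpec A | (1 + v * (r * a)) ∈ L.1}ᶜ,
      {L : MaxSpec A | (1 + u * n) ∈ L.1}ᶜ,
      TopologicalSpace.isOpen_generateFrom_of_mem ⟨1 + v * (r * a), rfl⟩,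
      TopologicalSpace.isOpen_generateFrom_of_mem ⟨1 + u * n, rfl⟩,
      hqM, hpN, ?_⟩
    rw [Set.disjoint_left]
    intro L hqL hpL
    have h0 : (1 + u * n) * (1 + v * (r * a)) ∈ L.1 := by
      rw [huv]; exact L.1.zero_mem
    rcases L.2.isPrime.mem_or_mem h0 with hmem | hmem
    · exact hpL hmem
    · exact hqL hmem
  haveI hcomp : CompactSpace (MaxSpec A) := by
    constructor
    rw [isCompact_iff_ultrafilter_le_nhds]
    intro F _
    have hspan : Ideal.span {a : A | {L : MaxSpec A | a ∈ L.1} ∈ F} ≠ ⊤ := by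
      intro htop
      have h1 : (1 : A) ∈ Ideal.span {a : A | {L : MaxSpec A | a ∈ L.1} ∈ F} :=
        htop ▸ Submodule.mem_top
      obtain ⟨t, htS, hts⟩ := Submodule.mem_span_finite_of_mem_span h1
      have hinter : (⋂ a ∈ (t : Set A), {L : MaxSpec A | a ∈ L.1}) ∈ F :=
        (Filter.biInter_mem t.finite_toSet).2 (fun a ha => htS ha)
      obtain ⟨L, hL⟩ := Filter.nonempty_of_mem hinter
      have hle : Ideal.span (t : Set A) ≤ L.1 :=
        Ideal.span_le.2 (fun a ha => Set.mem_iInter₂.1 hL a ha)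
      exact L.2.ne_top ((Ideal.eq_top_iff_one _).2 (hle hts))
    obtain ⟨M, hM, hSM⟩ := Ideal.exists_le_maximal _ hspan
    refine ⟨⟨M, hM⟩, Set.mem_univ _, ?_⟩
    rw [TopologicalSpace.nhds_generateFrom]
    refine le_iInf fun s => le_iInf fun hsmem => ?_
    obtain ⟨hMs, a, rfl⟩ := hsmem
    rw [Filter.le_principal_iff]
    have haS : {L : MaxSpec A | a ∈ L.1} ∉ F := by
      intro haF
      exact hMs (hSM (Ideal.subset_span haF))
    exact Ultrafilter.compl_mem_iff_notMem.2 haS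
  refine ⟨h.compactSpace, h.t2Space, h, fun M => rfl⟩
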